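/- arXiv:1507.00118 — 2 statements merged into one kernel-verified Lean document; each statement's English description precedes it below -/
import Mathlib

section
/- A bordered space is a pair (M, M̂) of topological spaces with M ⊆ M̂ an open subset. A morphism of bordered spaces f : (M, M̂) → (N, N̂) is a continuous map f : M → N such that the closure Γ̄_f of the graph Γ_f ⊆ M × N taken in M̂ × N̂ is proper over M̂ (i.e. the first projection Γ̄_f → M̂ is a proper map). Then the composition of two morphisms of bordered spaces f : (M, M̂) → (N, N̂) and g : (L, L̂) → (M, M̂) (that is, the continuous map f ∘ g : L → N) is again a morphism of bordered spaces (L, L̂) → (N, N̂). -/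
namespace Stmt6

/-- The graph of `f : M → N`, viewed as a subset of `M̂ × N̂`. -/
def graphSet {M' N' : Type*} (M : Set M') (N : Set N') (f : M → N) : Set (M' × N') :=
  {p | ∃ x : M, p = ((x : M'), ((f x : N') : N'))}

/-- `f : M → N` is a morphism of bordered spaces `(M, M̂) → (N, N̂)` if it is
continuous and the closure of its graph in `M̂ × N̂` is proper over `M̂`. -/
def IsBorderedMorphism {M' N' : Type*} [TopologicalSpace M'] [TopologicalSpace N']
    (M : Set M') (N : Set N') (f : M → N) : Prop :=
  Continuous f ∧
    IsProperMap (fun p : closure (graphSet M N f) => (p : M' × N').1)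

/-- A restriction of a continuous map to a subset is proper as soon as the
intersection of the subset with preimages of compact sets are compact
(target Hausdorff and compactly generated). -/
lemma isProperMap_restrict_of_isCompact_inter_preimage
    {X Y : Type*} [TopologicalSpace X] [TopologicalSpace Y]
    [T2Space Y] [CompactlyGeneratedSpace Y] {Z : Set X} {π : X → Y}
    (hπ : Continuous π)
    (h : ∀ ⦃K : Set Y⦄, IsCompact K → IsCompact (Z ∩ π ⁻¹' K)) :
    IsProperMap (fun z : Z => π z) := by
  rw [isProperMap_iff_isCompact_preimage]
  refine ⟨hπ.comp continuous_subtype_val, fun K hK => ?_⟩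
  rw [Subtype.isCompact_iff]
  have : (Subtype.val '' ((fun z : Z => π z) ⁻¹' K)) = Z ∩ π ⁻¹' K := by
    ext x
    constructor
    · rintro ⟨⟨x, hxZ⟩, hx, rfl⟩
      exact ⟨hxZ, hx⟩
    · rintro ⟨hxZ, hx⟩
      exact ⟨⟨x, hxZ⟩, hx, rfl⟩
  rw [this]
  exact h hK

/-- Converse extraction: from properness of a restriction, get compactness of
intersections with preimages of compact sets. -/
lemma isCompact_inter_preimage_of_isProperMap_restrict
    {X Y : Type*} [TopologicalSpace X] [TopologicalSpace Y] {Z : Set X} {π : X → Y}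
    (h : IsProperMap (fun z : Z => π z)) {K : Set Y} (hK : IsCompact K) :
    IsCompact (Z ∩ π ⁻¹' K) := by
  have h2 := (h.isCompact_preimage hK).image continuous_subtype_val
  have : (Subtype.val '' ((fun z : Z => π z) ⁻¹' K)) = Z ∩ π ⁻¹' K := by
    ext x
    constructor
    · rintro ⟨⟨x, hxZ⟩, hx, rfl⟩
      exact ⟨hxZ, hx⟩
    · rintro ⟨hxZ, hx⟩
      exact ⟨⟨x, hxZ⟩, hx, rfl⟩
  rwa [this] at h2

/-- The composition of two morphisms of bordered spaces is a morphism of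
bordered spaces. -/
theorem stmt_6 {L' M' N' : Type*}
    [TopologicalSpace L'] [T2Space L'] [LocallyCompactSpace L']
    [TopologicalSpace M'] [T2Space M'] [LocallyCompactSpace M']
    [TopologicalSpace N'] [T2Space N'] [LocallyCompactSpace N']
    (L : Set L') (M : Set M') (N : Set N')
    (hL : IsOpen L) (hM : IsOpen M) (hN : IsOpen N)
    (g : L → M) (f : M → N)
    (hg : IsBorderedMorphism L M g) (hf : IsBorderedMorphism M N f) :
    IsBorderedMorphism L N (f ∘ g) := by
  obtain ⟨hgc, hgp⟩ := hg
  obtain ⟨hfc, hfp⟩ := hf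
  set Γg := closure (graphSet L M g) with hΓg
  set Γf := closure (graphSet M N f) with hΓf
  -- the fiber product set
  set Z : Set (L' × M' × N') :=
    {q | (q.1, q.2.1) ∈ Γg ∧ (q.2.1, q.2.2) ∈ Γf} with hZdef
  have hZcl : IsClosed Z := by
    refine IsClosed.inter ?_ ?_
    · exact isClosed_closure.preimage (by fun_prop)
    · exact isClosed_closure.preimage (by fun_prop)
  -- compactness over compacts of `L'`
  have hPK : ∀ ⦃K : Set L'⦄, IsCompact K → IsCompact (Z ∩ Prod.fst ⁻¹' K) := by
    intro K hK
    have hA : IsCompact (Γg ∩ Prod.fst ⁻¹' K) :=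
      isCompact_inter_preimage_of_isProperMap_restrict hgp hK
    have hKm : IsCompact (Prod.snd '' (Γg ∩ Prod.fst ⁻¹' K)) :=
      hA.image continuous_snd
    have hB : IsCompact (Γf ∩ Prod.fst ⁻¹' (Prod.snd '' (Γg ∩ Prod.fst ⁻¹' K))) :=
      isCompact_inter_preimage_of_isProperMap_restrict hfp hKm
    have hKn : IsCompact
        (Prod.snd '' (Γf ∩ Prod.fst ⁻¹' (Prod.snd '' (Γg ∩ Prod.fst ⁻¹' K)))) :=
      hB.image continuous_snd
    refine IsCompact.of_isClosed_subset (hK.prod (hKm.prod hKn))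
      (hZcl.inter (hK.isClosed.preimage continuous_fst)) ?_
    rintro ⟨l, m, n⟩ ⟨⟨hgm, hfm⟩, hl⟩
    have hmA : (l, m) ∈ Γg ∩ Prod.fst ⁻¹' K := ⟨hgm, hl⟩
    have hm : m ∈ Prod.snd '' (Γg ∩ Prod.fst ⁻¹' K) := ⟨(l, m), hmA, rfl⟩
    have hnB : (m, n) ∈ Γf ∩ Prod.fst ⁻¹' (Prod.snd '' (Γg ∩ Prod.fst ⁻¹' K)) :=
      ⟨hfm, hm⟩
    exact ⟨hl, hm, ⟨(m, n), hnB, rfl⟩⟩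
  -- projection to L' × N'
  set π13 : L' × M' × N' → L' × N' := fun q => (q.1, q.2.2) with hπ13
  have hπ13c : Continuous π13 := by fun_prop
  -- the restriction of π13 to Z is proper
  have hproper13 : IsProperMap (fun z : Z => π13 z) := by
    refine isProperMap_restrict_of_isCompact_inter_preimage hπ13c ?_
    intro Kc hKc
    refine IsCompact.of_isClosed_subset (hPK (hKc.image continuous_fst))
      (hZcl.inter (hKc.isClosed.preimage hπ13c)) ?_
    rintro ⟨l, m, n⟩ ⟨hZq, hq⟩
    exact ⟨hZq, ⟨(l, n), hq, rfl⟩⟩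
  -- hence the image of Z is closed
  have hrange : IsClosed (π13 '' Z) := by
    have := hproper13.isClosedMap.isClosed_range
    rwa [show (fun z : Z => π13 z) = π13 ∘ Subtype.val from rfl,
      Set.range_comp, Subtype.range_coe] at this
  -- the graph of f ∘ g is contained in the image of Z
  have hsub : graphSet L N (f ∘ g) ⊆ π13 '' Z := by
    rintro p ⟨x, rfl⟩
    refine ⟨((x : L'), ((g x : M'), ((f (g x) : N') : N'))), ?_, rfl⟩
    exact ⟨subset_closure ⟨x, rfl⟩, subset_closure ⟨g x, rfl⟩⟩
  have hclsub : closure (graphSet L N (f ∘ g)) ⊆ π13 '' Z :=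
    closure_minimal hsub hrange
  refine ⟨hfc.comp hgc, ?_⟩
  refine isProperMap_restrict_of_isCompact_inter_preimage continuous_fst ?_
  intro K hK
  refine IsCompact.of_isClosed_subset ((hPK hK).image hπ13c)
    (isClosed_closure.inter (hK.isClosed.preimage continuous_fst)) ?_
  rintro p ⟨hp, hpK⟩
  obtain ⟨q, hqZ, rfl⟩ := hclsub hp
  exact ⟨q, ⟨hqZ, hpK⟩, rfl⟩

end Stmt6
end

section
/- Let f : (M, M̂) → (N, N̂) be a morphism of bordered spaces. Then f is proper (meaning: f : M → N is proper and the projection Γ̄_f → N̂ is proper) if and only if the following two conditions hold: (a) Γ̄_f ×_{N̂} N ⊆ Γ_f, i.e. every point of the closure Γ̄_f whose second coordinate lies in N already lies in the graph Γ_f; and (b) the projection Γ̄_f → N̂ is proper. -/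
namespace Stmt8

open Filter Topology

/-- The graph of `f : M → N`, viewed as a subset of `M̂ × N̂`. -/
def graphSet {M' N' : Type*} (M : Set M') (N : Set N') (f : M → N) : Set (M' × N') :=
  {p | ∃ x : M, p = ((x : M'), ((f x : N') : N'))}

/-- A morphism of bordered spaces `f : (M, M̂) → (N, N̂)` is proper if and only if
every point of the graph closure whose second coordinate lies in `N` already lies
in the graph, and the projection of the graph closure to `N̂` is proper. -/
theorem stmt_8 {M' N' : Type*}
    [TopologicalSpace M'] [T2Space M'] [LocallyCompactSpace M']
    [TopologicalSpace N'] [T2Space N'] [LocallyCompactSpace N']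
    (M : Set M') (N : Set N') (hM : IsOpen M) (hN : IsOpen N)
    (f : M → N) (hcont : Continuous f)
    (hmor : IsProperMap (fun p : closure (graphSet M N f) => (p : M' × N').1)) :
    (IsProperMap f ∧ IsProperMap (fun p : closure (graphSet M N f) => (p : M' × N').2)) ↔
    ((∀ p ∈ closure (graphSet M N f), p.2 ∈ N → p ∈ graphSet M N f) ∧
      IsProperMap (fun p : closure (graphSet M N f) => (p : M' × N').2)) := by
  constructor
  · rintro ⟨hf, hsnd⟩
    refine ⟨?_, hsnd⟩
    intro p hp hp2
    rw [mem_closure_iff_ultrafilter] at hp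
    obtain ⟨𝒰, hΓ, hlim⟩ := hp
    -- pull back 𝒰 to an ultrafilter on M via the graph map
    set m : M → M' × N' := fun x => ((x : M'), ((f x : N') : N')) with hm
    have hinj : Function.Injective m := by
      intro a b hab
      exact Subtype.ext (congrArg Prod.fst hab)
    have hrange : Set.range m ∈ 𝒰 := by
      refine 𝒰.toFilter.mem_of_superset hΓ ?_
      rintro q ⟨x, rfl⟩
      exact ⟨x, rfl⟩
    set 𝒱 : Ultrafilter M := 𝒰.comap hinj hrange with h𝒱
    have hmap : Filter.Tendsto m 𝒱 (𝓝 p) := by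
      refine Filter.Tendsto.mono_right ?_ hlim
      rw [h𝒱, Ultrafilter.coe_comap]
      exact Filter.map_comap_le
    have h1 : Filter.Tendsto (fun x : M => (x : M')) 𝒱 (𝓝 p.1) :=
      (continuous_fst.tendsto p).comp hmap
    have h2 : Filter.Tendsto (fun x : M => ((f x : N') : N')) 𝒱 (𝓝 p.2) :=
      (continuous_snd.tendsto p).comp hmap
    have h2' : Filter.Tendsto f 𝒱 (𝓝 (⟨p.2, hp2⟩ : N)) := by
      have := Topology.IsEmbedding.subtypeVal.tendsto_nhds_iff
        (f := f) (l := (𝒱 : Filter M)) (y := (⟨p.2, hp2⟩ : N))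
      exact this.mpr h2
    obtain ⟨x, hfx, hxlim⟩ := (isProperMap_iff_ultrafilter.mp hf).2 h2'
    have hxlim' : Filter.Tendsto (fun a : M => a) (𝒱 : Filter M) (𝓝 x) := hxlim
    have hx1 : Filter.Tendsto (fun x : M => (x : M')) 𝒱 (𝓝 (x : M')) :=
      (continuous_subtype_val.tendsto x).comp hxlim'
    have hp1 : p.1 = (x : M') := tendsto_nhds_unique h1 hx1
    refine ⟨x, ?_⟩
    have : p.2 = ((f x : N') : N') := by rw [hfx]
    exact Prod.ext hp1 this
  · rintro ⟨hgraph, hsnd⟩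
    refine ⟨?_, hsnd⟩
    rw [isProperMap_iff_ultrafilter]
    refine ⟨hcont, ?_⟩
    intro 𝒰 y hy
    set g : M → closure (graphSet M N f) := fun x =>
      ⟨((x : M'), ((f x : N') : N')), subset_closure ⟨x, rfl⟩⟩ with hg
    have hy' : Filter.Tendsto (fun q : closure (graphSet M N f) => (q : M' × N').2)
        (𝒰.map g) (𝓝 ((y : N') : N')) := by
      have : Filter.Tendsto (fun x : M => ((f x : N') : N')) 𝒰 (𝓝 ((y : N') : N')) :=
        (continuous_subtype_val.tendsto y).comp hy
      exact this
    obtain ⟨z, hz2, hzlim⟩ := (isProperMap_iff_ultrafilter.mp hsnd).2 hy'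
    have hzN : (z : M' × N').2 ∈ N := by rw [hz2]; exact y.2
    obtain ⟨x, hx⟩ := hgraph (z : M' × N') z.2 hzN
    refine ⟨x, ?_, ?_⟩
    · apply Subtype.ext
      have : ((f x : N') : N') = (z : M' × N').2 := by rw [hx]
      rw [this, hz2]
    · have hz1 : Filter.Tendsto (fun x' : M => (x' : M')) 𝒰 (𝓝 (x : M')) := by
        have := ((continuous_fst.tendsto (z : M' × N')).comp
          ((continuous_subtype_val.tendsto z).comp hzlim)).comp Filter.tendsto_map
        rw [hx] at this
        exact this
      have : Filter.Tendsto (fun a : M => a) (𝒰 : Filter M) (𝓝 x) :=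
        (Topology.IsEmbedding.subtypeVal.tendsto_nhds_iff
          (f := fun a : M => a) (l := (𝒰 : Filter M)) (y := x)).mpr hz1
      exact this

end Stmt8
end
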